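/- arXiv:1105.5624 — 2 statements merged into one kernel-verified Lean document; each statement's English description precedes it below -/
import Mathlib

section
/- Let x ∈ (0,1) and let Z : ℂ → ℂ be differentiable on ℂ \ {1} with Z(s) = ∑_{n=0}^∞ (n + i x)^{-s} for all s with Re(s) > 1. Then for every m ∈ ℕ, the real part of Z(-2m-1) equals (2m+1)! · ∑_{j=0}^{m} (-1)^{j+1} B_{2(m-j+1)} x^{2j} / ( (2(m-j+1))! (2j)! ) + (-1)^m x^{2m+2} / (2(m+1)). -/
open Complex Real

/-!
For `Re s > 1` expand every term `(n + a) ^ (-s)`, `n ≥ 1`, binomially in `a` up to order `K`: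
`∑ (n + a) ^ (-s) = a ^ (-s) + ∑_{j < K} C(-s, j) a ^ j ζ(s + j) + ∑_{n ≥ 1} R_K(s, n)`.
Since `∂_a R_{K+1}(s, n) = -s R_K(s + 1, n)`, the mean value inequality gives
`R_K(s, n) = O(n ^ (-Re s - K))` locally uniformly in `s`, so the remainder series is holomorphic
for `Re s > 1 - K`. The pole of `ζ(s + j)` at `s = 1 - j`, `j ≥ 1`, is cancelled by the zero of
`C(-s, j)`, hence the right-hand side continues `Z` across the half-plane minus `{1}`.
At `s = -M` the remainder vanishes by the binomial theorem, the terms `j ≤ M` give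
`∑ C(M, j) a ^ j ζ(j - M)`, and the cancelled pole at `j = M + 1` leaves `-a ^ (M + 1) / (M + 1)`.
For `a = i x` and `M = 2m + 1` the values `ζ(-k) = (-1) ^ k B_{k+1} / (k + 1)` are real, so only the
even powers of `i x` contribute to the real part.
-/

namespace Ring

variable {R : Type*} [CommRing R] [BinomialRing R]

lemma succ_mul_choose_succ_eq_choose_mul (r : R) (k : ℕ) :
    ((k : R) + 1) * choose r (k + 1) = choose r k * (r - k) := by
  simpa [Nat.choose_succ_self_right, choose_one_right] using choose_smul_choose r (Nat.le_succ k)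

lemma succ_mul_choose_succ_eq_mul_choose (r : R) (k : ℕ) :
    ((k : R) + 1) * choose r (k + 1) = r * choose (r - 1) k := by
  simpa [choose_one_right] using choose_smul_choose r (Nat.le_add_left 1 k)

end Ring

lemma Finset.sum_range_two_mul {M : Type*} [AddCommMonoid M] (f : ℕ → M) (n : ℕ) :
    ∑ j ∈ Finset.range (2 * n), f j = ∑ i ∈ Finset.range n, (f (2 * i) + f (2 * i + 1)) := by
  induction n with
  | zero => simp
  | succ n ih =>
    rw [show 2 * (n + 1) = 2 * n + 1 + 1 by ring, Finset.sum_range_succ, Finset.sum_range_succ, ih,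
      Finset.sum_range_succ, add_assoc]

@[fun_prop]
lemma differentiable_ringChoose (j : ℕ) : Differentiable ℂ fun r : ℂ => Ring.choose r j := by
  induction j with
  | zero => simp
  | succ k ih =>
    have h : (fun r : ℂ => Ring.choose r (k + 1)) =
        fun r => Ring.choose r k * (r - k) / ((k : ℂ) + 1) := by
      ext r
      rw [← Ring.succ_mul_choose_succ_eq_choose_mul,
        mul_div_cancel_left₀ _ (Nat.cast_add_one_ne_zero k)]
    rw [h]
    fun_prop

lemma norm_cpow_neg_le {z s : ℂ} {r : ℝ} (hr : 0 < r) (hrz : r ≤ z.re) (hs : 0 ≤ s.re) :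
    ‖z ^ (-s)‖ ≤ Real.exp (π / 2 * |s.im|) * r ^ (-s.re) := by
  have hnorm : ‖z‖ ^ (-s).re ≤ r ^ (-s).re := by
    rw [neg_re]
    exact Real.rpow_le_rpow_of_nonpos hr (hrz.trans (re_le_norm z)) (neg_nonpos.mpr hs)
  have harg : |z.arg| ≤ π / 2 := abs_arg_le_pi_div_two_iff.mpr (hr.le.trans hrz)
  have hexp : Real.exp (-(π / 2 * |s.im|)) ≤ Real.exp (z.arg * (-s).im) := by
    have : z.arg * s.im ≤ π / 2 * |s.im| := (le_abs_self _).trans (by rw [abs_mul]; gcongr)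
    rw [Real.exp_le_exp, neg_im, mul_neg]
    linarith
  calc ‖z ^ (-s)‖ ≤ ‖z‖ ^ (-s).re / Real.exp (z.arg * (-s).im) := norm_cpow_le z (-s)
    _ ≤ r ^ (-s.re) / Real.exp (-(π / 2 * |s.im|)) := by
        rw [← neg_re]; gcongr
    _ = Real.exp (π / 2 * |s.im|) * r ^ (-s.re) := by rw [Real.exp_neg]; field_simp

lemma ofReal_add_mem_slitPlane {n : ℝ} (hn : 0 < n) {w : ℂ} (hw : 0 ≤ w.re) :
    (n : ℂ) + w ∈ slitPlane :=
  Or.inl (by simp only [add_re, ofReal_re]; linarith)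

noncomputable def cpowBinomRemainder (K : ℕ) (s : ℂ) (n : ℝ) (w : ℂ) : ℂ :=
  ((n : ℂ) + w) ^ (-s) - ∑ j ∈ Finset.range K, Ring.choose (-s) j * w ^ j * (n : ℂ) ^ (-s - j)

lemma cpowBinomRemainder_succ_zero (K : ℕ) (s : ℂ) (n : ℝ) :
    cpowBinomRemainder (K + 1) s n 0 = 0 := by
  simp [cpowBinomRemainder, Finset.sum_range_succ']

lemma hasDerivAt_cpowBinomRemainder {n : ℝ} (hn : 0 < n) {w : ℂ} (hw : 0 ≤ w.re) (K : ℕ)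
    (s : ℂ) :
    HasDerivAt (cpowBinomRemainder (K + 1) s n) (-s * cpowBinomRemainder K (s + 1) n w) w := by
  have hpow : HasDerivAt (fun w : ℂ => ((n : ℂ) + w) ^ (-s)) (-s * ((n : ℂ) + w) ^ (-s - 1)) w := by
    simpa only [mul_one] using ((hasDerivAt_id' w).const_add (n : ℂ)).cpow_const (c := -s)
      (ofReal_add_mem_slitPlane hn hw)
  have hterm (j : ℕ) : HasDerivAt (fun w => Ring.choose (-s) j * w ^ j * (n : ℂ) ^ (-s - j))
      (Ring.choose (-s) j * (j * w ^ (j - 1)) * (n : ℂ) ^ (-s - j)) w :=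
    ((hasDerivAt_pow j w).const_mul _).mul_const _
  refine (hpow.sub (HasDerivAt.fun_sum (u := Finset.range (K + 1)) fun j _ => hterm j)).congr_deriv
    ?_
  rw [cpowBinomRemainder, mul_sub, Finset.sum_range_succ', Finset.mul_sum]
  simp only [CharP.cast_eq_zero, zero_mul, mul_zero, add_zero]
  congr 1
  · ring_nf
  · refine Finset.sum_congr rfl fun k _ => ?_
    have h := Ring.succ_mul_choose_succ_eq_mul_choose (-s) k
    rw [show -s - 1 = -(s + 1) by ring] at h
    push_cast
    rw [show -s - ((k : ℂ) + 1) = -(s + 1) - k by ring]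
    linear_combination (w ^ k * (n : ℂ) ^ (-(s + 1) - k)) * h

lemma norm_cpowBinomRemainder_le {n : ℝ} (hn : 0 < n) (K : ℕ) :
    ∀ s : ℂ, 0 ≤ s.re + K → ∀ w : ℂ, 0 ≤ w.re →
      ‖cpowBinomRemainder K s n w‖ ≤ (∏ i ∈ Finset.range K, (‖s‖ + i)) *
        Real.exp (π / 2 * |s.im|) * ‖w‖ ^ K * n ^ (-(s.re + K)) := by
  induction K with
  | zero =>
    intro s hs w hw
    simpa [cpowBinomRemainder] using norm_cpow_neg_le hn (by simpa using hw) (by simpa using hs)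
  | succ K ih =>
    intro s hs w hw
    set C := ‖s‖ * ((∏ i ∈ Finset.range K, (‖s‖ + 1 + i)) * Real.exp (π / 2 * |s.im|) *
      ‖w‖ ^ K * n ^ (-(s.re + 1 + K)))
    have hconv : Convex ℝ ({v : ℂ | 0 ≤ v.re} ∩ Metric.closedBall 0 ‖w‖) :=
      (convex_halfSpace_re_ge 0).inter (convex_closedBall 0 ‖w‖)
    have hbound : ∀ v ∈ {v : ℂ | 0 ≤ v.re} ∩ Metric.closedBall 0 ‖w‖,
        ‖-s * cpowBinomRemainder K (s + 1) n v‖ ≤ C := by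
      rintro v ⟨hv, hvw⟩
      rw [mem_closedBall_zero_iff] at hvw
      have h := ih (s + 1) (by simp only [add_re, one_re]; push_cast at hs; linarith) v hv
      simp only [add_re, one_re, add_im, one_im, add_zero] at h
      rw [norm_mul, norm_neg]
      refine mul_le_mul_of_nonneg_left (h.trans ?_) (norm_nonneg s)
      gcongr with i
      exact (norm_add_le s 1).trans (by simp)
    have hmvt := hconv.norm_image_sub_le_of_norm_hasDerivWithin_le
      (fun v hv => (hasDerivAt_cpowBinomRemainder hn hv.1 K s).hasDerivWithinAt) hbound
      (x := 0) (y := w) ⟨by simp, by simp⟩ ⟨hw, by simp⟩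
    rw [cpowBinomRemainder_succ_zero, sub_zero, sub_zero] at hmvt
    refine hmvt.trans (le_of_eq ?_)
    rw [Finset.prod_range_succ']
    simp only [C]
    push_cast
    ring_nf

lemma cpowBinomRemainder_neg_natCast {M K : ℕ} (hMK : M < K) (n : ℝ) (w : ℂ) :
    cpowBinomRemainder K (-M) n w = 0 := by
  have hvanish : ∀ j ∈ Finset.range K, j ∉ Finset.range (M + 1) →
      Ring.choose (M : ℂ) j * w ^ j * (n : ℂ) ^ ((M : ℂ) - j) = 0 := by
    intro j _ hj
    rw [Ring.choose_natCast, Nat.choose_eq_zero_of_lt (by simpa using hj)]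
    simp
  rw [cpowBinomRemainder, sub_eq_zero]
  simp only [neg_neg]
  rw [← Finset.sum_subset (Finset.range_subset_range.mpr hMK) hvanish, cpow_natCast, add_comm,
    add_pow]
  refine Finset.sum_congr rfl fun j hj => ?_
  rw [Ring.choose_natCast, ← Nat.cast_sub (Nat.lt_succ_iff.mp (Finset.mem_range.mp hj)),
    cpow_natCast]
  ring

lemma differentiable_cpowBinomRemainder {n : ℝ} (hn : 0 < n) {w : ℂ} (hw : 0 ≤ w.re) (K : ℕ) :
    Differentiable ℂ fun s => cpowBinomRemainder K s n w := by
  have hnw : (n : ℂ) + w ≠ 0 := slitPlane_ne_zero (ofReal_add_mem_slitPlane hn hw)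
  have hn0 : (n : ℂ) ≠ 0 := ofReal_ne_zero.mpr hn.ne'
  unfold cpowBinomRemainder
  fun_prop (disch := simp [hnw, hn0])

noncomputable def binomRemainderSeries (a : ℂ) (K : ℕ) (s : ℂ) : ℂ :=
  ∑' n : ℕ, cpowBinomRemainder K s (n + 1) a

lemma summable_natCast_add_one_rpow_neg {p : ℝ} (hp : 1 < p) :
    Summable fun n : ℕ => ((n : ℝ) + 1) ^ (-p) := by
  refine ((Real.summable_one_div_nat_add_rpow 1 p).mpr hp).congr fun n => ?_
  rw [abs_of_nonneg (by positivity), Real.rpow_neg (by positivity), one_div]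

lemma norm_cpowBinomRemainder_le_of_le {n : ℝ} (hn : 1 ≤ n) {w s : ℂ} (hw : 0 ≤ w.re) {K : ℕ}
    {σ R : ℝ} (hσ : 0 ≤ σ + K) (hσs : σ ≤ s.re) (hsR : ‖s‖ ≤ R) :
    ‖cpowBinomRemainder K s n w‖ ≤
      (∏ i ∈ Finset.range K, (R + i)) * Real.exp (π / 2 * R) * ‖w‖ ^ K * n ^ (-(σ + K)) := by
  have hR : 0 ≤ R := (norm_nonneg s).trans hsR
  have hprod : 0 ≤ ∏ i ∈ Finset.range K, (R + i) := Finset.prod_nonneg fun i _ => by positivity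
  refine (norm_cpowBinomRemainder_le (by linarith) K s (by linarith) w hw).trans ?_
  gcongr
  exact (abs_im_le_norm s).trans hsR

lemma summable_cpowBinomRemainder {a : ℂ} (ha : 0 ≤ a.re) {K : ℕ} {s : ℂ} (hs : 1 < s.re + K) :
    Summable fun n : ℕ => cpowBinomRemainder K s (n + 1) a :=
  Summable.of_norm_bounded ((summable_natCast_add_one_rpow_neg hs).mul_left _) fun n =>
    norm_cpowBinomRemainder_le_of_le (by simp) ha (by linarith) le_rfl le_rfl

lemma differentiableOn_binomRemainderSeries {a : ℂ} (ha : 0 ≤ a.re) (K : ℕ) :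
    DifferentiableOn ℂ (binomRemainderSeries a K) {s | 1 < s.re + K} := by
  intro s₀ (hs₀ : 1 < s₀.re + K)
  set r := (s₀.re + K - 1) / 2
  have hr : 0 < r := by simp only [r]; linarith
  have hball : DifferentiableOn ℂ (binomRemainderSeries a K) (Metric.ball s₀ r) := by
    refine differentiableOn_tsum_of_summable_norm (u := fun n : ℕ =>
        (∏ i ∈ Finset.range K, (‖s₀‖ + r + i)) * Real.exp (π / 2 * (‖s₀‖ + r)) * ‖a‖ ^ K *
          ((n : ℝ) + 1) ^ (-(s₀.re - r + K)))
      ((summable_natCast_add_one_rpow_neg (p := s₀.re - r + K)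
        (by simp only [r]; linarith)).mul_left _)
      (fun n => (differentiable_cpowBinomRemainder (by positivity) ha K).differentiableOn)
      Metric.isOpen_ball fun n s hs => ?_
    rw [Metric.mem_ball, dist_eq_norm] at hs
    have hre : |s.re - s₀.re| < r := (sub_re s s₀ ▸ abs_re_le_norm (s - s₀)).trans_lt hs
    refine norm_cpowBinomRemainder_le_of_le (by simp) ha (by simp only [r]; linarith)
      (by linarith [neg_abs_le (s.re - s₀.re)]) ?_
    exact (norm_le_norm_add_norm_sub' s s₀).trans (by linarith)
  exact (hball.differentiableAt (Metric.ball_mem_nhds s₀ hr)).differentiableWithinAt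

lemma hasSum_natCast_add_one_cpow_neg {s : ℂ} (hs : 1 < s.re) :
    HasSum (fun n : ℕ => ((n : ℂ) + 1) ^ (-s)) (riemannZeta s) := by
  have hsum : Summable fun n : ℕ => ((n : ℂ) + 1) ^ (-s) := by
    refine Summable.of_norm ((summable_natCast_add_one_rpow_neg hs).congr fun n => ?_)
    rw [show (n : ℂ) + 1 = ((n + 1 : ℝ) : ℂ) by push_cast; ring,
      norm_cpow_eq_rpow_re_of_pos (by positivity), neg_re]
  rw [zeta_eq_tsum_one_div_nat_add_one_cpow hs]
  simpa only [cpow_neg, one_div] using hsum.hasSum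

lemma hasSum_natCast_add_cpow_neg {a : ℂ} (ha : 0 ≤ a.re) (K : ℕ) {s : ℂ} (hs : 1 < s.re) :
    HasSum (fun n : ℕ => ((n : ℂ) + a) ^ (-s))
      (a ^ (-s) + ∑ j ∈ Finset.range K, Ring.choose (-s) j * a ^ j * riemannZeta (s + j)
        + binomRemainderSeries a K s) := by
  have hmain : HasSum
      (fun n : ℕ => ∑ j ∈ Finset.range K, Ring.choose (-s) j * a ^ j * ((n : ℂ) + 1) ^ (-s - j))
      (∑ j ∈ Finset.range K, Ring.choose (-s) j * a ^ j * riemannZeta (s + j)) := by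
    refine hasSum_sum fun j _ => ?_
    rw [show -s - j = -(s + j) by ring]
    refine (hasSum_natCast_add_one_cpow_neg ?_).mul_left _
    simp only [add_re, natCast_re]
    linarith [j.cast_nonneg (α := ℝ)]
  have hrem := (summable_cpowBinomRemainder ha (K := K) (s := s)
    (by linarith [K.cast_nonneg (α := ℝ)])).hasSum
  have hterm (n : ℕ) : (((n + 1 : ℕ) : ℂ) + a) ^ (-s) =
      ∑ j ∈ Finset.range K, Ring.choose (-s) j * a ^ j * ((n : ℂ) + 1) ^ (-s - j) +
        cpowBinomRemainder K s (n + 1) a := by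
    simp only [cpowBinomRemainder]
    push_cast
    ring
  refine (hasSum_nat_add_iff' 1).mp ?_
  rw [Finset.sum_range_one, Nat.cast_zero, zero_add, add_assoc, add_sub_cancel_left]
  simpa only [hterm, binomRemainderSeries] using hmain.add hrem

lemma choose_neg_succ_mul_riemannZeta {s : ℂ} {k : ℕ} (hs : s + k ≠ 0) :
    Ring.choose (-s) (k + 1) * riemannZeta (s + k + 1) =
      -(Ring.choose (-s) k / (k + 1) * riemannZeta₁ (s + k + 1)) := by
  have hchoose := Ring.succ_mul_choose_succ_eq_choose_mul (-s) k
  rw [riemannZeta_eq_inv_sub_mul (by simpa using hs), add_sub_cancel_right]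
  field_simp
  linear_combination riemannZeta₁ (s + k + 1) * hchoose

/-- The `k`-th summand is `Ring.choose (-s) (k + 1) * a ^ (k + 1) * riemannZeta (s + k + 1)`
rewritten by `choose_neg_succ_mul_riemannZeta` through the entire function
`riemannZeta₁ s = (s - 1) * riemannZeta s`, so that no pole remains at `s = -k`. -/
noncomputable def hurwitzContinuation (a : ℂ) (K : ℕ) (s : ℂ) : ℂ :=
  a ^ (-s) + riemannZeta s
    - ∑ k ∈ Finset.range K, a ^ (k + 1) / (k + 1) * Ring.choose (-s) k * riemannZeta₁ (s + k + 1)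
    + binomRemainderSeries a (K + 1) s

lemma hasSum_hurwitzContinuation {a : ℂ} (ha : 0 ≤ a.re) (K : ℕ) {s : ℂ} (hs : 1 < s.re) :
    HasSum (fun n : ℕ => ((n : ℂ) + a) ^ (-s)) (hurwitzContinuation a K s) := by
  have hpole (k : ℕ) : s + k ≠ 0 := fun h => by
    have := congrArg re h
    simp only [add_re, natCast_re, zero_re] at this
    linarith [(Nat.cast_nonneg k : (0 : ℝ) ≤ k)]
  have hterms :
      ∑ k ∈ Finset.range K, Ring.choose (-s) (k + 1) * a ^ (k + 1) * riemannZeta (s + ↑(k + 1)) =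
        -∑ k ∈ Finset.range K,
          a ^ (k + 1) / (k + 1) * Ring.choose (-s) k * riemannZeta₁ (s + k + 1) := by
    rw [← Finset.sum_neg_distrib]
    refine Finset.sum_congr rfl fun k _ => ?_
    rw [Nat.cast_succ, ← add_assoc, mul_right_comm, choose_neg_succ_mul_riemannZeta (hpole k)]
    ring
  convert hasSum_natCast_add_cpow_neg ha (K + 1) hs using 1
  rw [hurwitzContinuation, Finset.sum_range_succ', hterms]
  simp only [Ring.choose_zero_right, pow_zero, Nat.cast_zero, add_zero, one_mul]
  ring

lemma differentiableAt_hurwitzContinuation {a : ℂ} (ha₀ : a ≠ 0) (ha : 0 ≤ a.re) {K : ℕ}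
    {s : ℂ} (hs₁ : s ≠ 1) (hs : -(K : ℝ) < s.re) :
    DifferentiableAt ℂ (hurwitzContinuation a K) s := by
  have hrem : DifferentiableAt ℂ (binomRemainderSeries a (K + 1)) s :=
    (differentiableOn_binomRemainderSeries ha (K + 1)).differentiableAt <|
      (isOpen_lt continuous_const (continuous_re.add continuous_const)).mem_nhds
        (show 1 < s.re + ((K + 1 : ℕ) : ℝ) by push_cast; linarith)
  have hzeta := differentiableAt_riemannZeta hs₁
  unfold hurwitzContinuation
  fun_prop (disch := exact Or.inl ha₀)

lemma hurwitzContinuation_neg_natCast (a : ℂ) (M : ℕ) :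
    hurwitzContinuation a (M + 1) (-M) =
      a ^ M + ∑ j ∈ Finset.range (M + 1), (M.choose j : ℂ) * a ^ j * riemannZeta (j - M)
        - a ^ (M + 1) / (M + 1) := by
  have hrem : binomRemainderSeries a (M + 2) (-M) = 0 := by
    simp [binomRemainderSeries, cpowBinomRemainder_neg_natCast (Nat.lt_add_of_pos_right two_pos)]
  have hmid : ∀ k ∈ Finset.range M, a ^ (k + 1) / (k + 1) * Ring.choose (M : ℂ) k *
      riemannZeta₁ (-M + k + 1) =
        -((M.choose (k + 1) : ℂ) * a ^ (k + 1) * riemannZeta (↑(k + 1) - M)) := by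
    intro k hk
    have hne : -(M : ℂ) + k ≠ 0 := by
      rw [neg_add_eq_sub, sub_ne_zero]
      exact_mod_cast (Finset.mem_range.mp hk).ne
    have h := choose_neg_succ_mul_riemannZeta hne
    rw [neg_neg, Ring.choose_natCast, Ring.choose_natCast] at h
    rw [Ring.choose_natCast, Nat.cast_succ, show (k : ℂ) + 1 - M = -M + k + 1 by ring]
    linear_combination a ^ (k + 1) * h
  rw [hurwitzContinuation, hrem, add_zero, neg_neg, cpow_natCast, Finset.sum_range_succ,
    Finset.sum_range_succ', Finset.sum_congr rfl hmid, Finset.sum_neg_distrib]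
  simp only [Ring.choose_natCast, Nat.choose_self, Nat.choose_zero_right, Nat.cast_one, mul_one,
    one_mul, pow_zero, Nat.cast_zero, zero_sub, neg_add_cancel, zero_add, riemannZeta₁_one]
  ring

lemma eq_hurwitzContinuation_of_re_lt_one {a : ℂ} (ha₀ : a ≠ 0) (ha : 0 ≤ a.re) {Z : ℂ → ℂ}
    (hZ : DifferentiableOn ℂ Z {1}ᶜ)
    (hsum : ∀ s : ℂ, 1 < s.re → Z s = ∑' n : ℕ, ((n : ℂ) + a) ^ (-s)) (K : ℕ) {s : ℂ}
    (hsK : -(K : ℝ) < s.re) (hs₁ : s.re < 1) :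
    Z s = hurwitzContinuation a K s := by
  set H : Set ℂ := {s | -(K : ℝ) < s.re}
  set U : Set ℂ := H ∩ {s | 0 < s.im} ∪ H ∩ {s | s.re < 1}
  have hUopen : IsOpen U :=
    ((isOpen_lt continuous_const continuous_re).inter
      (isOpen_lt continuous_const continuous_im)).union
      ((isOpen_lt continuous_const continuous_re).inter (isOpen_lt continuous_re continuous_const))
  have hU₁ : U ⊆ {1}ᶜ := by
    rintro s (⟨-, hs⟩ | ⟨-, hs⟩) rfl <;> simp at hs
  have hUconn : IsPreconnected U :=
    IsPreconnected.union (s.re + I) ⟨by simpa [H], by simp⟩ ⟨by simpa [H], by simpa⟩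
      ((convex_halfSpace_re_gt _).inter (convex_halfSpace_im_gt 0)).isPreconnected
      ((convex_halfSpace_re_gt _).inter (convex_halfSpace_re_lt 1)).isPreconnected
  have hZU : AnalyticOnNhd ℂ Z U := (hZ.analyticOnNhd isOpen_compl_singleton).mono hU₁
  have hWU : AnalyticOnNhd ℂ (hurwitzContinuation a K) U := by
    refine DifferentiableOn.analyticOnNhd (fun s hs => ?_) hUopen
    have hsH : -(K : ℝ) < s.re := by rcases hs with h | h <;> exact h.1
    exact (differentiableAt_hurwitzContinuation ha₀ ha (hU₁ hs) hsH).differentiableWithinAt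
  have heq : Z =ᶠ[nhds (2 + I)] hurwitzContinuation a K := by
    filter_upwards [(isOpen_lt continuous_const continuous_re).mem_nhds
      (show (1 : ℝ) < (2 + I).re by simp)] with s (hs : 1 < s.re)
    rw [hsum s hs, (hasSum_hurwitzContinuation ha K hs).tsum_eq]
  exact hZU.eqOn_of_preconnected_of_eventuallyEq hWU hUconn
    (Or.inl ⟨by simp only [H, Set.mem_ofPred_eq, add_re, re_ofNat, I_re, add_zero]; linarith,
      by simp⟩) heq (Or.inr ⟨hsK, hs₁⟩)

lemma I_mul_ofReal_pow_two_mul (x : ℝ) (k : ℕ) :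
    (I * x) ^ (2 * k) = (((-1) ^ k * x ^ (2 * k) : ℝ) : ℂ) := by
  rw [mul_pow, pow_mul, I_sq]
  push_cast
  ring

lemma riemannZeta_neg_natCast_eq_ofReal (k : ℕ) :
    riemannZeta (-k) = (((-1) ^ k * bernoulli (k + 1) / (k + 1) : ℝ) : ℂ) := by
  rw [riemannZeta_neg_nat_eq_bernoulli]
  push_cast
  ring

lemma re_choose_mul_I_mul_pow_odd_mul_riemannZeta (x : ℝ) (i k : ℕ) :
    (((2 * (i + k) + 1).choose (2 * i + 1) : ℂ) * (I * x) ^ (2 * i + 1) *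
      riemannZeta (↑(2 * i + 1) - ↑(2 * (i + k) + 1))).re = 0 := by
  obtain ⟨z, hz⟩ : ∃ z : ℝ, riemannZeta (-↑(2 * k)) = z := ⟨_, riemannZeta_neg_natCast_eq_ofReal _⟩
  rw [show (↑(2 * i + 1) : ℂ) - ↑(2 * (i + k) + 1) = -↑(2 * k) by push_cast; ring, hz, pow_succ,
    I_mul_ofReal_pow_two_mul]
  generalize ((-1) ^ i * x ^ (2 * i) : ℝ) = r
  simp

lemma re_choose_mul_I_mul_pow_even_mul_riemannZeta (x : ℝ) (i k : ℕ) :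
    (((2 * (i + k) + 1).choose (2 * i) : ℂ) * (I * x) ^ (2 * i) *
      riemannZeta (↑(2 * i) - ↑(2 * (i + k) + 1))).re =
      (2 * (i + k) + 1).factorial * ((-1) ^ (i + 1) * bernoulli (2 * (k + 1)) * x ^ (2 * i) /
        ((2 * (k + 1)).factorial * (2 * i).factorial)) := by
  rw [show (↑(2 * i) : ℂ) - ↑(2 * (i + k) + 1) = -↑(2 * k + 1) by push_cast; ring,
    riemannZeta_neg_natCast_eq_ofReal, I_mul_ofReal_pow_two_mul, ← ofReal_natCast, ← ofReal_mul,
    ← ofReal_mul, ofReal_re]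
  have hchoose :
      ((2 * (i + k) + 1).choose (2 * i) : ℝ) * (2 * i).factorial * (2 * k + 1).factorial =
      (2 * (i + k) + 1).factorial := by
    have := Nat.choose_mul_factorial_mul_factorial (show 2 * i ≤ 2 * (i + k) + 1 by omega)
    rw [show 2 * (i + k) + 1 - 2 * i = 2 * k + 1 by omega] at this
    exact_mod_cast this
  have hfact : ((2 * (k + 1)).factorial : ℝ) = (2 * k + 2) * (2 * k + 1).factorial := by
    rw [show 2 * (k + 1) = 2 * k + 1 + 1 by ring, Nat.factorial_succ]
    push_cast
    ring
  have hsign : ((-1 : ℝ)) ^ (2 * k + 1) = -1 := Odd.neg_one_pow ⟨k, rfl⟩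
  rw [← hchoose, hfact, hsign, show 2 * k + 1 + 1 = 2 * (k + 1) by ring, pow_succ]
  push_cast
  field_simp
  ring

lemma re_hurwitzContinuation_I_mul_neg_odd (x : ℝ) (m : ℕ) :
    (hurwitzContinuation (I * x) (2 * m + 1 + 1) (-(2 * m + 1 : ℕ))).re =
      (Nat.factorial (2 * m + 1) : ℝ) *
        ∑ j ∈ Finset.range (m + 1),
          (-1) ^ (j + 1) * (bernoulli (2 * (m - j + 1)) : ℝ) * x ^ (2 * j) /
            ((Nat.factorial (2 * (m - j + 1)) : ℝ) * (Nat.factorial (2 * j) : ℝ)) +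
      (-1) ^ m * x ^ (2 * m + 2) / (2 * (m + 1)) := by
  have hterm : ∀ i ∈ Finset.range (m + 1),
      (((2 * m + 1).choose (2 * i) : ℂ) * (I * x) ^ (2 * i) *
          riemannZeta (↑(2 * i) - ↑(2 * m + 1))).re +
        (((2 * m + 1).choose (2 * i + 1) : ℂ) * (I * x) ^ (2 * i + 1) *
          riemannZeta (↑(2 * i + 1) - ↑(2 * m + 1))).re =
      (2 * m + 1).factorial * ((-1) ^ (i + 1) * bernoulli (2 * (m - i + 1)) * x ^ (2 * i) /
        ((2 * (m - i + 1)).factorial * (2 * i).factorial)) := by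
    intro i hi
    obtain ⟨k, rfl⟩ : ∃ k, m = i + k := ⟨m - i, by rw [Finset.mem_range] at hi; omega⟩
    rw [re_choose_mul_I_mul_pow_odd_mul_riemannZeta, re_choose_mul_I_mul_pow_even_mul_riemannZeta,
      add_zero, Nat.add_sub_cancel_left]
  have hodd : ((I * x) ^ (2 * m + 1)).re = 0 := by
    rw [pow_succ, I_mul_ofReal_pow_two_mul]
    generalize ((-1) ^ m * x ^ (2 * m) : ℝ) = r
    simp
  have hlast : ((I * x) ^ (2 * (m + 1)) / (↑(2 * m + 1) + 1)).re =
      -((-1) ^ m * x ^ (2 * m + 2) / (2 * (m + 1))) := by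
    rw [I_mul_ofReal_pow_two_mul, show (↑(2 * m + 1) + 1 : ℂ) = ((2 * (m + 1) : ℝ) : ℂ) by
      push_cast; ring, ← ofReal_div, ofReal_re]
    ring
  rw [hurwitzContinuation_neg_natCast, sub_re, add_re, re_sum,
    show 2 * m + 1 + 1 = 2 * (m + 1) by ring, Finset.sum_range_two_mul, Finset.sum_congr rfl hterm,
    hodd, hlast, Finset.mul_sum]
  ring

/-- For `x ∈ (0,1)` and `Z` the analytic continuation of the Hurwitz zeta function
`ζ_H(s, ix)`, the real part of `ζ_H(-2m-1, ix)` is given in terms of Bernoulli numbers. -/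
theorem re_hurwitzZeta_neg_odd (x : ℝ) (hx : x ∈ Set.Ioo (0 : ℝ) 1)
    (Z : ℂ → ℂ) (hZ : DifferentiableOn ℂ Z {(1 : ℂ)}ᶜ)
    (hsum : ∀ s : ℂ, 1 < s.re → Z s = ∑' n : ℕ, ((n : ℂ) + Complex.I * x) ^ (-s)) :
    ∀ m : ℕ, (Z (-(2 * m) - 1)).re =
      (Nat.factorial (2 * m + 1) : ℝ) *
        ∑ j ∈ Finset.range (m + 1),
          (-1) ^ (j + 1) * (bernoulli (2 * (m - j + 1)) : ℝ) * x ^ (2 * j) /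
            ((Nat.factorial (2 * (m - j + 1)) : ℝ) * (Nat.factorial (2 * j) : ℝ)) +
      (-1) ^ m * x ^ (2 * m + 2) / (2 * (m + 1)) := by
  intro m
  have ha₀ : I * x ≠ 0 := mul_ne_zero I_ne_zero (ofReal_ne_zero.mpr hx.1.ne')
  have hs : -(2 * m : ℂ) - 1 = -(2 * m + 1 : ℕ) := by push_cast; ring
  have hre : (-((2 * m + 1 : ℕ) : ℂ)).re = -(2 * m + 1) := by
    rw [neg_re, natCast_re]
    push_cast
    ring
  rw [hs, eq_hurwitzContinuation_of_re_lt_one ha₀ (by simp) hZ hsum (2 * m + 1 + 1)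
    (by rw [hre]; push_cast; linarith) (by rw [hre]; linarith [m.cast_nonneg (α := ℝ)]),
    re_hurwitzContinuation_I_mul_neg_odd]
end

section
/- Let x ∈ (0,1) and let m ∈ ℕ with m ≥ 1. Then the imaginary part of ∑_{n=0}^∞ (n + i x)^{-2m} equals (-1)^{m+1} ( (2π)^{2m} / (π (2m-1)!) ) · ∑_{k=0}^∞ ζ'_R(−2(m+k)) (2π x)^{2k+1} / (2k+1)!. -/
/-!
For `‖w‖ < 1` expand each summand binomially,
`(n + 1 + w)^{-(k+1)} = ∑ⱼ C(j+k, k) (-w)^j (n+1)^{-(j+k+1)}`; the double series converges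
absolutely, so summing over `n` first gives the Taylor expansion
`∑ₙ (n + 1 + w)^{-(k+1)} = ∑ⱼ C(j+k, k) (-w)^j ζ(j+k+1)`. For `w = ix` and `k + 1 = 2m` only
odd `j` contribute to the imaginary part (zeta is real on the reals), and the `n = 0` summand
`(ix)^{-2m}` is real. Differentiating the functional equation
`ζ(1-s) = 2 (2π)^{-s} Γ(s) cos(πs/2) ζ(s)` at `s = 2N+1`, where the cosine vanishes, gives
`ζ'(-2N) = (-1)^N (2N)! ζ(2N+1) / (2 (2π)^{2N})`, which turns the odd Taylor coefficients into
the stated ones.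
-/

open Complex Real

theorem ofReal_re_riemannZeta_ofReal (x : ℝ) : ((riemannZeta x).re : ℂ) = riemannZeta x :=
  conj_eq_iff_re.mp <| by rw [← riemannZeta_conj, conj_ofReal]

theorem hasSum_riemannZeta_natCast {p : ℕ} (hp : 1 < p) :
    HasSum (fun n : ℕ ↦ 1 / ((n : ℂ) + 1) ^ p) (riemannZeta p) := by
  have hre : 1 < (p : ℂ).re := by simpa using (by exact_mod_cast hp : (1 : ℝ) < p)
  have h := zeta_eq_tsum_one_div_nat_add_one_cpow hre
  simp only [cpow_natCast] at h
  rw [h]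
  refine Summable.hasSum (.of_norm ?_)
  refine ((summable_nat_add_iff 1).mpr (Real.summable_one_div_nat_pow.mpr hp)).congr fun n ↦ ?_
  rw [norm_div, norm_one, norm_pow, ← Nat.cast_add_one, Complex.norm_natCast]

open Filter Topology in
theorem deriv_riemannZeta_neg_two_mul_nat {n : ℕ} (hn : n ≠ 0) :
    deriv riemannZeta (-2 * n) =
      (-1) ^ n * (2 * n).factorial / (2 * (2 * π : ℂ) ^ (2 * n)) * riemannZeta (2 * n + 1) := by
  set s₀ : ℂ := 2 * n + 1 with hs₀
  have hs₀_nat : s₀ = ((2 * n + 1 : ℕ) : ℂ) := by push_cast; rfl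
  have hre : 1 < s₀.re := by
    rw [hs₀_nat, natCast_re]; norm_cast; omega
  -- Near `s₀` the functional equation reads `ζ (1 - s) = G s * cos (π s / 2)` with `G` holomorphic;
  -- the cosine vanishes at `s₀`, so only `G s₀ * cos' s₀` survives in the derivative.
  set G : ℂ → ℂ := fun s ↦ 2 * (2 * π) ^ (-s) * Complex.Gamma s * riemannZeta s
  have hfe : (fun s ↦ riemannZeta (1 - s)) =ᶠ[𝓝 s₀] fun s ↦ G s * Complex.cos (π * s / 2) := by
    filter_upwards [(isOpen_lt continuous_const continuous_re).mem_nhds hre] with s hs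
    have hs' : ∀ m : ℕ, s ≠ -m := fun m h ↦ by
      rw [h] at hs; simp at hs; linarith [m.cast_nonneg (α := ℝ)]
    rw [riemannZeta_one_sub hs' (by rintro rfl; simp at hs)]
    ring
  have hG : DifferentiableAt ℂ G s₀ := by
    have hΓ : DifferentiableAt ℂ Complex.Gamma s₀ := differentiableAt_Gamma _ fun m h ↦ by
      rw [h] at hre; simp at hre; linarith [m.cast_nonneg (α := ℝ)]
    have hζ : DifferentiableAt ℂ riemannZeta s₀ :=
      differentiableAt_riemannZeta (by rintro h; rw [h] at hre; simp at hre)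
    have hpow : DifferentiableAt ℂ (fun s : ℂ ↦ (2 * (π : ℂ)) ^ (-s)) s₀ :=
      (differentiableAt_neg_iff.mpr differentiableAt_id).const_cpow (Or.inl (by simp [pi_ne_zero]))
    exact ((hpow.const_mul 2).mul hΓ).mul hζ
  have hcos : HasDerivAt (fun s : ℂ ↦ Complex.cos (π * s / 2))
      (-Complex.sin (π * s₀ / 2) * (π / 2)) s₀ := by
    simpa using (((hasDerivAt_id s₀).const_mul (π : ℂ)).div_const 2).ccos
  have harg : (π : ℂ) * s₀ / 2 = ((n * π + π / 2 : ℝ) : ℂ) := by push_cast; ring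
  have hcos₀ : Complex.cos (π * s₀ / 2) = 0 := by
    rw [harg, ← ofReal_cos, Real.cos_add_pi_div_two, Real.sin_nat_mul_pi]; simp
  have hsin₀ : Complex.sin (π * s₀ / 2) = (-1) ^ n := by
    rw [harg, ← ofReal_sin, Real.sin_add_pi_div_two, Real.cos_nat_mul_pi]; push_cast; rfl
  have hG₀ : G s₀ = 2 * ((2 * π : ℂ) ^ (2 * n + 1))⁻¹ * (2 * n).factorial * riemannZeta s₀ := by
    simp only [G]
    rw [cpow_neg, hs₀_nat, cpow_natCast, Nat.cast_add_one, Complex.Gamma_nat_eq_factorial]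
  have hderiv : HasDerivAt (fun s ↦ riemannZeta (1 - s)) (-deriv riemannZeta (-2 * n)) s₀ := by
    have h1 : 1 - s₀ = -2 * n := by rw [hs₀]; ring
    have hζ : DifferentiableAt ℂ riemannZeta (1 - s₀) :=
      differentiableAt_riemannZeta fun h ↦ by
        have := congrArg re (h1 ▸ h); simp at this; linarith [n.cast_nonneg (α := ℝ)]
    rw [← h1]
    exact hζ.hasDerivAt.comp_const_sub
  have key := hderiv.unique ((hG.hasDerivAt.mul hcos).congr_of_eventuallyEq hfe)
  rw [hcos₀, hsin₀, hG₀, mul_zero, zero_add, pow_succ] at key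
  have hπ : (π : ℂ) ≠ 0 := ofReal_ne_zero.mpr pi_ne_zero
  field_simp at key ⊢
  linear_combination -key

theorem re_deriv_riemannZeta_neg_two_mul_nat {n : ℕ} (hn : n ≠ 0) :
    (deriv riemannZeta (-2 * n)).re =
      (-1) ^ n * (2 * n).factorial / (2 * (2 * π) ^ (2 * n)) * (riemannZeta (2 * n + 1)).re := by
  rw [deriv_riemannZeta_neg_two_mul_nat hn, ← re_ofReal_mul]
  push_cast
  rfl

theorem hasSum_choose_mul_div_pow {𝕜 : Type*} [NormedField 𝕜] (k : ℕ) {z w : 𝕜}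
    (h : ‖w‖ < ‖z‖) :
    HasSum (fun j : ℕ ↦ (j + k).choose k * (-w) ^ j / z ^ (j + k + 1)) ((z + w) ^ (k + 1))⁻¹ := by
  have hz : z ≠ 0 := norm_pos_iff.mp ((norm_nonneg w).trans_lt h)
  have hzw : z + w ≠ 0 := fun h' ↦ by
    rw [add_eq_zero_iff_eq_neg.mp h', norm_neg] at h; exact lt_irrefl _ h
  have hr : ‖-w / z‖ < 1 := by
    rwa [norm_div, norm_neg, div_lt_one (norm_pos_iff.mpr hz)]
  convert (hasSum_choose_mul_geometric_of_norm_lt_one k hr).div_const (z ^ (k + 1)) using 1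
  · ext j
    rw [div_pow]
    field_simp
    ring
  · rw [one_sub_div hz, sub_neg_eq_add, div_pow]
    field_simp

theorem HasSum.comp_two_mul_add_one {α : Type*} [AddCommMonoid α] [TopologicalSpace α]
    {f : ℕ → α} {a : α} (hf : HasSum f a) (h : ∀ i, f (2 * i) = 0) :
    HasSum (fun i ↦ f (2 * i + 1)) a := by
  refine (Function.Injective.hasSum_iff (fun i j hij ↦ by simpa using hij) fun j hj ↦ ?_).mpr hf
  obtain ⟨i, rfl⟩ : Even j := Nat.not_odd_iff_even.mp fun ⟨i, hi⟩ ↦ hj ⟨i, hi.symm⟩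
  rw [← two_mul]; exact h i

/-- The terms of `∑ₙ (n + 1 + w)^{-(k+1)}` after expanding each summand binomially in `w`. -/
noncomputable def hurwitzTaylorTerm (k : ℕ) (w : ℂ) (p : ℕ × ℕ) : ℂ :=
  (p.2 + k).choose k * (-w) ^ p.2 / ((p.1 : ℂ) + 1) ^ (p.2 + k + 1)

section HurwitzTaylor

variable {k : ℕ} {w : ℂ}

theorem hasSum_hurwitzTaylorTerm_row (hw : ‖w‖ < 1) (n : ℕ) :
    HasSum (fun j ↦ hurwitzTaylorTerm k w (n, j)) (((n : ℂ) + 1 + w) ^ (k + 1))⁻¹ := by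
  have hn : ‖w‖ < ‖(n : ℂ) + 1‖ := by
    rw [← Nat.cast_add_one, Complex.norm_natCast]
    exact hw.trans_le (by simp)
  simpa only [hurwitzTaylorTerm] using hasSum_choose_mul_div_pow k hn

theorem hasSum_hurwitzTaylorTerm_column (hk : k ≠ 0) (j : ℕ) :
    HasSum (fun n ↦ hurwitzTaylorTerm k w (n, j))
      ((j + k).choose k * (-w) ^ j * riemannZeta ((j + k + 1 : ℕ) : ℂ)) := by
  have h := (hasSum_riemannZeta_natCast (p := j + k + 1) (by omega)).mul_left
    ((j + k).choose k * (-w) ^ j)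
  refine h.congr_fun fun n ↦ ?_
  simp only [hurwitzTaylorTerm]
  ring

theorem summable_norm_hurwitzTaylorTerm (hk : k ≠ 0) (hw : ‖w‖ < 1) :
    Summable fun p ↦ ‖hurwitzTaylorTerm k w p‖ := by
  have hnorm (p : ℕ × ℕ) : ‖hurwitzTaylorTerm k w p‖ =
      (p.2 + k).choose k * (-(-‖w‖)) ^ p.2 / ((p.1 : ℝ) + 1) ^ (p.2 + k + 1) := by
    simp only [hurwitzTaylorTerm, norm_div, norm_mul, norm_pow, norm_neg, neg_neg,
      Complex.norm_natCast]
    rw [← Nat.cast_add_one, Complex.norm_natCast, Nat.cast_add_one]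
  have hrow (n : ℕ) : HasSum (fun j ↦ ‖hurwitzTaylorTerm k w (n, j)‖)
      (((n : ℝ) + (1 - ‖w‖)) ^ (k + 1))⁻¹ := by
    have h := hasSum_choose_mul_div_pow (z := (n : ℝ) + 1) (w := -‖w‖) k (by
      rw [norm_neg, norm_norm, Real.norm_of_nonneg (by positivity)]
      linarith [n.cast_nonneg (α := ℝ)])
    rw [← sub_eq_add_neg, add_sub_assoc] at h
    simpa only [hnorm] using h
  refine (summable_prod_of_nonneg fun _ ↦ norm_nonneg _).mpr ⟨fun n ↦ (hrow n).summable, ?_⟩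
  simp only [fun n ↦ (hrow n).tsum_eq]
  have hpos (n : ℕ) : 0 < (n : ℝ) + (1 - ‖w‖) := by linarith [n.cast_nonneg (α := ℝ)]
  refine ((Real.summable_one_div_nat_add_rpow (1 - ‖w‖) (k + 1)).mpr (by norm_cast; omega)).congr
    fun n ↦ ?_
  rw [abs_of_pos (hpos n), one_div, ← Nat.cast_add_one, rpow_natCast]

theorem hasSum_hurwitzTaylorTerm (hk : k ≠ 0) (hw : ‖w‖ < 1) :
    HasSum (hurwitzTaylorTerm k w) (∑' p, hurwitzTaylorTerm k w p) :=
  (summable_norm_hurwitzTaylorTerm hk hw).of_norm.hasSum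

theorem summable_inv_natCast_add_one_add_pow (hk : k ≠ 0) (hw : ‖w‖ < 1) :
    Summable fun n : ℕ ↦ (((n : ℂ) + 1 + w) ^ (k + 1))⁻¹ :=
  ((hasSum_hurwitzTaylorTerm hk hw).prod_fiberwise (hasSum_hurwitzTaylorTerm_row hw)).summable

theorem hasSum_choose_mul_riemannZeta (hk : k ≠ 0) (hw : ‖w‖ < 1) :
    HasSum (fun j : ℕ ↦ (j + k).choose k * (-w) ^ j * riemannZeta ((j + k + 1 : ℕ) : ℂ))
      (∑' n : ℕ, (((n : ℂ) + 1 + w) ^ (k + 1))⁻¹) := by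
  have h := hasSum_hurwitzTaylorTerm hk hw
  rw [((h.prod_fiberwise (hasSum_hurwitzTaylorTerm_row hw))).tsum_eq]
  exact ((Equiv.prodComm ℕ ℕ).hasSum_iff.mpr h).prod_fiberwise
    (hasSum_hurwitzTaylorTerm_column hk)

end HurwitzTaylor

theorem hasSum_im_inv_natCast_add_one_add_I_mul_pow {k : ℕ} (hk : k ≠ 0) {x : ℝ} (hx : |x| < 1) :
    HasSum (fun i : ℕ ↦ (-1) ^ (i + 1) * (2 * i + 1 + k).choose k * x ^ (2 * i + 1) *
        (riemannZeta ((2 * i + 1 + k + 1 : ℕ) : ℂ)).re)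
      (∑' n : ℕ, (((n : ℂ) + 1 + I * x) ^ (k + 1))⁻¹).im := by
  have hterm (j : ℕ) : ((j + k).choose k * (-(I * x)) ^ j * riemannZeta ((j + k + 1 : ℕ) : ℂ)).im =
      ((-I) ^ j).im * ((j + k).choose k * x ^ j * (riemannZeta ((j + k + 1 : ℕ) : ℂ)).re) := by
    have hζ : riemannZeta ((j + k + 1 : ℕ) : ℂ) = (riemannZeta ((j + k + 1 : ℕ) : ℂ)).re := by
      exact_mod_cast (ofReal_re_riemannZeta_ofReal (j + k + 1 : ℕ)).symm
    rw [hζ, neg_mul_eq_neg_mul, mul_pow, ofReal_re]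
    simp only [mul_im, mul_re, ← ofReal_pow, ← ofReal_natCast, ofReal_re, ofReal_im]
    ring
  have hI (i : ℕ) : (-I) ^ (2 * i) = ((-1 : ℝ) ^ i : ℝ) := by
    rw [pow_mul]; simp
  have h := (hasSum_im (hasSum_choose_mul_riemannZeta hk (w := I * x) (by simpa using hx)))
  refine (h.comp_two_mul_add_one fun i ↦ by rw [hterm, hI, ofReal_im, zero_mul]).congr_fun
    fun i ↦ ?_
  rw [hterm, pow_succ (-I), hI]
  simp only [mul_neg, neg_im, mul_im, ofReal_re, ofReal_im, I_re, I_im]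
  ring

theorem choose_mul_re_riemannZeta_eq_re_deriv_riemannZeta {m : ℕ} (hm : 1 ≤ m) (x : ℝ) (i : ℕ) :
    (-1) ^ (i + 1) * (2 * i + 1 + (2 * m - 1)).choose (2 * m - 1) * x ^ (2 * i + 1) *
        (riemannZeta ((2 * i + 1 + (2 * m - 1) + 1 : ℕ) : ℂ)).re =
      (-1) ^ (m + 1) * ((2 * π) ^ (2 * m) / (π * (Nat.factorial (2 * m - 1) : ℝ))) *
        ((deriv riemannZeta (-(2 * ((m : ℂ) + (i : ℂ))))).re * (2 * π * x) ^ (2 * i + 1) /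
          (Nat.factorial (2 * i + 1) : ℝ)) := by
  obtain ⟨d, rfl⟩ : ∃ d, m = d + 1 := ⟨m - 1, by omega⟩
  rw [show 2 * (d + 1) - 1 = 2 * d + 1 by omega]
  have hN : 2 * i + 1 + (2 * d + 1) = 2 * (d + 1 + i) := by omega
  have harg : -(2 * (((d + 1 : ℕ) : ℂ) + (i : ℂ))) = -2 * ((d + 1 + i : ℕ) : ℂ) := by
    push_cast; ring
  have hζ : ((2 * (d + 1 + i) + 1 : ℕ) : ℂ) = 2 * ((d + 1 + i : ℕ) : ℂ) + 1 := by push_cast; ring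
  have hchoose := Nat.cast_choose ℝ (Nat.le_add_left (2 * d + 1) (2 * i + 1))
  rw [Nat.add_sub_cancel, hN] at hchoose
  rw [harg, re_deriv_riemannZeta_neg_two_mul_nat (by omega), hN, hchoose, hζ]
  have hsign : (-1 : ℝ) ^ (d + 1 + 1) * (-1) ^ (d + 1 + i) = (-1) ^ (i + 1) := by
    rw [← pow_add, show d + 1 + 1 + (d + 1 + i) = 2 * (d + 1) + (i + 1) by ring, pow_add, pow_mul]
    norm_num
  field_simp
  rw [← hsign]
  ring

/-- For `x ∈ (0,1)` and `m ≥ 1`, the imaginary part of `ζ_H(2m, ix) = ∑_{n≥0} (n+ix)^{-2m}`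
is given by a series involving the values `ζ'_R(-2(m+k))` of the derivative of the
Riemann zeta function at negative even integers. -/
theorem im_hurwitzZeta_pos_even (x : ℝ) (hx : x ∈ Set.Ioo (0 : ℝ) 1) (m : ℕ) (hm : 1 ≤ m) :
    (∑' n : ℕ, ((n : ℂ) + Complex.I * x) ^ (-(2 * (m : ℂ)))).im =
      (-1) ^ (m + 1) * ((2 * π) ^ (2 * m) / (π * (Nat.factorial (2 * m - 1) : ℝ))) *
        ∑' k : ℕ, (deriv riemannZeta (-(2 * ((m : ℂ) + (k : ℂ))))).re *
          (2 * π * x) ^ (2 * k + 1) / (Nat.factorial (2 * k + 1) : ℝ) := by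
  have hk : 2 * m - 1 ≠ 0 := by omega
  have hx' : |x| < 1 := abs_lt.mpr ⟨by linarith [hx.1], hx.2⟩
  have hsum := summable_inv_natCast_add_one_add_pow hk (w := I * x) (by simpa using hx')
  have him := hasSum_im_inv_natCast_add_one_add_I_mul_pow hk hx'
  rw [Nat.sub_add_cancel (by omega : 1 ≤ 2 * m)] at hsum him
  have hcpow (n : ℕ) : ((n : ℂ) + I * x) ^ (-(2 * (m : ℂ))) = (((n : ℂ) + I * x) ^ (2 * m))⁻¹ := by
    rw [cpow_neg, ← cpow_natCast]; push_cast; rfl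
  have hzero : (((I * x) ^ (2 * m))⁻¹).im = 0 := by
    have hsq : (I * x) ^ 2 = ((-x ^ 2 : ℝ) : ℂ) := by rw [mul_pow, I_sq]; push_cast; ring
    rw [pow_mul, hsq, ← ofReal_pow, ← ofReal_inv, ofReal_im]
  rw [tsum_congr hcpow, ((summable_nat_add_iff 1).mp (by simpa using hsum)).tsum_eq_zero_add,
    add_im, Nat.cast_zero, zero_add, hzero, zero_add]
  push_cast
  rw [← him.tsum_eq, ← tsum_mul_left]
  exact tsum_congr (choose_mul_re_riemannZeta_eq_re_deriv_riemannZeta hm x)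
end
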